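/- Let Ψ = ⟨z₁⟩ * ⟨z₂⟩ * ⟨z₃⟩ be the free product of three cyclic groups of order 2 with generators z₁, z₂, z₃, and let F ⊆ Ψ be the subgroup generated by x = z₁z₂ and y = z₂z₃, which is free on x and y. Then there exist automorphisms α̇, β̇ of Ψ with α̇(z₁) = (z₁z₂)⁻¹ z₁ (z₁z₂), α̇(z₂) = (z₁z₂)⁻¹ z₂ (z₁z₂), α̇(z₃) = (z₁z₂)⁻² z₃ (z₁z₂)², and β̇(z₁) = z₁, β̇(z₂) = (z₂z₃)⁻¹ z₂ (z₂z₃), β̇(z₃) = (z₂z₃)⁻¹ z₃ (z₂z₃); moreover F is invariant under α̇ and β̇, and α̇ restricted to F equals α while β̇ restricted to F equals β, where α, β ∈ Aut F are defined by α(x) = x, α(y) = yx² and β(x) = xy², β(y) = y. -/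

import Mathlib

/-!
Both maps are *factorwise conjugations* `of m ↦ (g i)⁻¹ (of m) (g i)` of the free product, which
are homomorphisms by its universal property. Such a map is an automorphism, with inverse the
factorwise conjugation by `(g i)⁻¹`, as soon as both maps fix every conjugator `g i`. For `α̇` the
conjugators are powers of `x = z₁z₂`, which both maps fix; for `β̇` they are powers of `y = z₂z₃`.
Since `α̇(x) = x` and `α̇(y) = yx²`, `α̇` carries `F = ⟨x, y⟩` to `⟨x, yx²⟩ = F`, and dually for `β̇`.
-/

set_option linter.unusedVariables false

namespace CSP

/-- The free product `Ψ = ⟨z₁⟩ * ⟨z₂⟩ * ⟨z₃⟩` of three cyclic groups of order two. -/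
abbrev Psi : Type := Monoid.CoprodI (fun _ : Fin 3 => Multiplicative (ZMod 2))

/-- The generator `zᵢ` of the `i`-th free factor of `Ψ`. -/
def z (i : Fin 3) : Psi :=
  Monoid.CoprodI.of (i := i) (Multiplicative.ofAdd (1 : ZMod 2))

/-- The subgroup `F` of `Ψ` generated by `x = z₁z₂` and `y = z₂z₃`; it is free on
these two generators. -/
def Fsub : Subgroup Psi := Subgroup.closure {z 0 * z 1, z 1 * z 2}

end CSP

namespace Subgroup

variable {G : Type*} [Group G]

theorem closure_pair_mul_zpow_right (x y : G) (n : ℤ) :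
    closure {x, y * x ^ n} = closure {x, y} := by
  refine le_antisymm ?_ ?_ <;> rw [closure_le, Set.insert_subset_iff, Set.singleton_subset_iff]
  · exact ⟨subset_closure (by simp),
      mul_mem (subset_closure (by simp)) (zpow_mem (subset_closure (by simp)) n)⟩
  · have hx : x ∈ closure {x, y * x ^ n} := subset_closure (by simp)
    have hyx : y * x ^ n ∈ closure {x, y * x ^ n} := subset_closure (by simp)
    refine ⟨hx, ?_⟩
    simpa using mul_mem hyx (zpow_mem hx (-n))

theorem closure_pair_mul_zpow_left (x y : G) (n : ℤ) :
    closure {x * y ^ n, y} = closure {x, y} := by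
  rw [Set.pair_comm, closure_pair_mul_zpow_right, Set.pair_comm]

end Subgroup

namespace Monoid.CoprodI

variable {ι : Type*} {G : ι → Type*} [∀ i, Group (G i)]

def conjFactors (g : ι → CoprodI G) : CoprodI G →* CoprodI G :=
  lift fun i => (MulAut.conj (g i)⁻¹).toMonoidHom.comp of

@[simp]
theorem conjFactors_of (g : ι → CoprodI G) {i : ι} (m : G i) :
    conjFactors g (of m) = (g i)⁻¹ * of m * g i := by
  simp [conjFactors]

theorem conjFactors_comp_conjFactors_inv (g : ι → CoprodI G)
    (hg : ∀ i, conjFactors g (g i) = g i) :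
    (conjFactors g).comp (conjFactors g⁻¹) = MonoidHom.id _ := by
  refine ext_hom _ _ fun i => MonoidHom.ext fun m => ?_
  simp only [MonoidHom.coe_comp, Function.comp_apply, conjFactors_of, Pi.inv_apply, inv_inv,
    map_mul, map_inv, hg, MonoidHom.id_apply]
  group

def conjFactorsEquiv (g : ι → CoprodI G) (hg : ∀ i, conjFactors g (g i) = g i)
    (hg' : ∀ i, conjFactors g⁻¹ (g i) = g i) : CoprodI G ≃* CoprodI G :=
  (conjFactors g).toMulEquiv (conjFactors g⁻¹)
    (by simpa using conjFactors_comp_conjFactors_inv g⁻¹ (by simpa using hg'))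
    (conjFactors_comp_conjFactors_inv g hg)

end Monoid.CoprodI

namespace CSP

open Monoid.CoprodI

@[simp]
theorem z_inv (i : Fin 3) : (z i)⁻¹ = z i := by
  rw [z, ← map_inv]; rfl

@[simp]
theorem z_mul_self (i : Fin 3) : z i * z i = 1 := by
  simpa using inv_mul_cancel (z i)

@[simp]
theorem z_mul_z_mul (i : Fin 3) (w : Psi) : z i * (z i * w) = w := by
  simpa using inv_mul_cancel_left (z i) w

@[simp]
theorem conjFactors_z (g : Fin 3 → Psi) (i : Fin 3) :
    conjFactors g (z i) = (g i)⁻¹ * z i * g i :=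
  conjFactors_of g _

def adotConj : Fin 3 → Psi := ![z 0 * z 1, z 0 * z 1, (z 0 * z 1) ^ 2]

def bdotConj : Fin 3 → Psi := ![1, z 1 * z 2, z 1 * z 2]

def adot : Psi ≃* Psi :=
  have hx : conjFactors adotConj (z 0 * z 1) = z 0 * z 1 := by simp [adotConj, mul_assoc]
  have hx' : conjFactors adotConj⁻¹ (z 0 * z 1) = z 0 * z 1 := by simp [adotConj, mul_assoc]
  conjFactorsEquiv adotConj
    (fun i => by
      fin_cases i <;> [exact hx; exact hx; exact (map_pow _ _ 2).trans (by rw [hx]; rfl)])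
    (fun i => by
      fin_cases i <;> [exact hx'; exact hx'; exact (map_pow _ _ 2).trans (by rw [hx']; rfl)])

def bdot : Psi ≃* Psi :=
  have hy : conjFactors bdotConj (z 1 * z 2) = z 1 * z 2 := by simp [bdotConj, mul_assoc]
  have hy' : conjFactors bdotConj⁻¹ (z 1 * z 2) = z 1 * z 2 := by simp [bdotConj, mul_assoc]
  conjFactorsEquiv bdotConj
    (fun i => by fin_cases i <;> [exact map_one _; exact hy; exact hy])
    (fun i => by fin_cases i <;> [exact map_one _; exact hy'; exact hy'])

theorem adot_z (i : Fin 3) : adot (z i) = (adotConj i)⁻¹ * z i * adotConj i :=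
  conjFactors_z adotConj i

theorem bdot_z (i : Fin 3) : bdot (z i) = (bdotConj i)⁻¹ * z i * bdotConj i :=
  conjFactors_z bdotConj i

theorem adot_x : adot (z 0 * z 1) = z 0 * z 1 := by
  simp [adot_z, adotConj, mul_assoc]

theorem adot_y : adot (z 1 * z 2) = z 1 * z 2 * (z 0 * z 1) ^ 2 := by
  simp [adot_z, adotConj, pow_two, mul_assoc]

theorem bdot_x : bdot (z 0 * z 1) = z 0 * z 1 * (z 1 * z 2) ^ 2 := by
  simp [bdot_z, bdotConj, pow_two, mul_assoc]

theorem bdot_y : bdot (z 1 * z 2) = z 1 * z 2 := by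
  simp [bdot_z, bdotConj, mul_assoc]

theorem map_adot_Fsub : Fsub.map adot.toMonoidHom = Fsub := by
  rw [Fsub, MonoidHom.map_closure, Set.image_pair]
  simpa [adot_x, adot_y] using Subgroup.closure_pair_mul_zpow_right (z 0 * z 1) (z 1 * z 2) 2

theorem map_bdot_Fsub : Fsub.map bdot.toMonoidHom = Fsub := by
  rw [Fsub, MonoidHom.map_closure, Set.image_pair]
  simpa [bdot_x, bdot_y] using Subgroup.closure_pair_mul_zpow_left (z 0 * z 1) (z 1 * z 2) 2

theorem exists_adot_bdot :
    ∃ adot bdot : Psi ≃* Psi,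
      adot (z 0) = (z 0 * z 1)⁻¹ * z 0 * (z 0 * z 1) ∧
      adot (z 1) = (z 0 * z 1)⁻¹ * z 1 * (z 0 * z 1) ∧
      adot (z 2) = ((z 0 * z 1) ^ 2)⁻¹ * z 2 * (z 0 * z 1) ^ 2 ∧
      bdot (z 0) = z 0 ∧
      bdot (z 1) = (z 1 * z 2)⁻¹ * z 1 * (z 1 * z 2) ∧
      bdot (z 2) = (z 1 * z 2)⁻¹ * z 2 * (z 1 * z 2) ∧
      Subgroup.map adot.toMonoidHom Fsub = Fsub ∧
      Subgroup.map bdot.toMonoidHom Fsub = Fsub ∧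
      adot (z 0 * z 1) = z 0 * z 1 ∧
      adot (z 1 * z 2) = (z 1 * z 2) * (z 0 * z 1) ^ 2 ∧
      bdot (z 0 * z 1) = (z 0 * z 1) * (z 1 * z 2) ^ 2 ∧
      bdot (z 1 * z 2) = z 1 * z 2 :=
  ⟨adot, bdot, adot_z 0, adot_z 1, adot_z 2, by simpa [bdotConj] using bdot_z 0, bdot_z 1,
    bdot_z 2, map_adot_Fsub, map_bdot_Fsub, adot_x, adot_y, bdot_x, bdot_y⟩

end CSP
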